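/- Let λ > 0, t > 0, and x, x₀ ∈ ℝ. Define p_±(λ, x₀) = (√λ/√π) ∫_{−∞}^{±x₀} e^{−λs²} ds (so p₊(λ,x₀) + p₋(λ,x₀) = 1), and for ε ∈ {−1,+1} define Q_ε(x,t) = [h_ε(x,t)/h_ε(x₀,0)] · (2πσ₋²(t))^{−1/2} e^{−(x−x₀e^{−λt})²/(2σ₋²(t))}, where h_ε(x,t) = e^{−λt} e^{λx²} (√λ/√π) ∫_{−∞}^{εx} e^{−λs²} ds and σ₋²(t) = (1 − e^{−2λt})/(2λ). Then p₋(λ,x₀) Q_{−1}(x,t) + p₊(λ,x₀) Q_{+1}(x,t) = (2πσ₊²(t))^{−1/2} e^{−(x − x₀e^{λt})²/(2σ₊²(t))}, with σ₊²(t) = (e^{2λt} − 1)/(2λ); i.e., the Gaussian transition density of the repulsive Ornstein–Uhlenbeck process is the p-mixture of the two oppositely skewed h-transformed densities. -/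

import Mathlib

/-- Variance of the stationary Ornstein–Uhlenbeck process: `σ₋²(t) = (1-e^{-2λt})/(2λ)`. -/
noncomputable def sigmaMinusSq (lam t : ℝ) : ℝ := (1 - Real.exp (-2 * lam * t)) / (2 * lam)

/-- Variance of the repulsive Ornstein–Uhlenbeck process: `σ₊²(t) = (e^{2λt}-1)/(2λ)`. -/
noncomputable def sigmaPlusSq (lam t : ℝ) : ℝ := (Real.exp (2 * lam * t) - 1) / (2 * lam)

/-- The space–time harmonic function of Theorem 4:
`h_ε(x,t) = e^{-λt} e^{λx²} (√λ/√π) ∫_{-∞}^{εx} e^{-λs²} ds`. -/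
noncomputable def hOU (lam ε x t : ℝ) : ℝ :=
  Real.exp (-lam * t) * Real.exp (lam * x ^ 2) * (Real.sqrt lam / Real.sqrt Real.pi) *
    ∫ s in Set.Iic (ε * x), Real.exp (-lam * s ^ 2)

/-- The h-transformed (extended skew-Normal) transition density of Theorem 4. -/
noncomputable def QOU (lam ε x₀ t x : ℝ) : ℝ :=
  (hOU lam ε x t / hOU lam ε x₀ 0) *
    ((Real.sqrt (2 * Real.pi * sigmaMinusSq lam t))⁻¹ *
      Real.exp (-(x - x₀ * Real.exp (-lam * t)) ^ 2 / (2 * sigmaMinusSq lam t)))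

/-- Bernoulli mixing probabilities of Corollary 4.2:
`p_±(λ,x₀) = (√λ/√π) ∫_{-∞}^{±x₀} e^{-λs²} ds`. -/
noncomputable def pOU (lam ε x₀ : ℝ) : ℝ :=
  (Real.sqrt lam / Real.sqrt Real.pi) * ∫ s in Set.Iic (ε * x₀), Real.exp (-lam * s ^ 2)

open MeasureTheory in
/-- The two half-line Gaussian integrals with opposite endpoints sum to the full
Gaussian integral. -/
lemma intsumOU (lam c : ℝ) (hlam : 0 < lam) :
    (∫ s in Set.Iic c, Real.exp (-lam * s ^ 2)) +
      (∫ s in Set.Iic (-c), Real.exp (-lam * s ^ 2)) = Real.sqrt (Real.pi / lam) := by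
  have hint := integrable_exp_neg_mul_sq hlam
  have h1 : (∫ s in Set.Iic (-c), Real.exp (-lam * s ^ 2))
      = ∫ s in Set.Ioi c, Real.exp (-lam * s ^ 2) := by
    rw [← neg_neg c, ← integral_comp_neg_Iic]
    simp [neg_neg]
  rw [h1, intervalIntegral.integral_Iic_add_Ioi hint.integrableOn hint.integrableOn,
    integral_gaussian]

open MeasureTheory in
/-- Positivity of the half-line Gaussian integral. -/
lemma IposOU (lam c : ℝ) (hlam : 0 < lam) :
    0 < ∫ s in Set.Iic c, Real.exp (-lam * s ^ 2) := by
  have hint := (integrable_exp_neg_mul_sq hlam).integrableOn (s := Set.Iic c)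
  rw [setIntegral_pos_iff_support_of_nonneg_ae
      (Filter.Eventually.of_forall fun s => (Real.exp_pos _).le) hint]
  have : Function.support (fun s : ℝ => Real.exp (-lam * s ^ 2)) = Set.univ := by
    ext s; simp [Function.mem_support, (Real.exp_pos _).ne']
  rw [this, Set.univ_inter]
  simp [Real.volume_Iic]

/-- The purely algebraic identity relating the two Gaussian kernels. -/
lemma finalAlgOU (lam t x x₀ : ℝ) (hlam : 0 < lam) (ht : 0 < t) :
    Real.exp (-lam * x₀ ^ 2) * (Real.exp (-lam * t) * Real.exp (lam * x ^ 2)) *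
      ((Real.sqrt (2 * Real.pi * sigmaMinusSq lam t))⁻¹ *
        Real.exp (-(x - x₀ * Real.exp (-lam * t)) ^ 2 / (2 * sigmaMinusSq lam t)))
    = (Real.sqrt (2 * Real.pi * sigmaPlusSq lam t))⁻¹ *
        Real.exp (-(x - x₀ * Real.exp (lam * t)) ^ 2 / (2 * sigmaPlusSq lam t)) := by
  set u := Real.exp (lam * t) with hu
  have hu0 : 0 < u := Real.exp_pos _
  have hu1 : 1 < u := by
    rw [hu, show (1:ℝ) = Real.exp 0 by simp]
    exact Real.exp_lt_exp.2 (mul_pos hlam ht)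
  have e1 : Real.exp (-lam * t) = u⁻¹ := by
    rw [show -lam * t = -(lam * t) by ring, Real.exp_neg]
  have e2 : Real.exp (-2 * lam * t) = (u * u)⁻¹ := by
    rw [show -2 * lam * t = -(lam * t + lam * t) by ring, Real.exp_neg, Real.exp_add]
  have e3 : Real.exp (2 * lam * t) = u * u := by
    rw [show 2 * lam * t = lam * t + lam * t by ring, Real.exp_add]
  have huu1 : 0 < u * u - 1 := by nlinarith
  have hinv : (u * u)⁻¹ < 1 := by
    rw [inv_lt_one_iff₀]; right; nlinarith
  have hσm : sigmaMinusSq lam t = (1 - (u * u)⁻¹) / (2 * lam) := by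
    rw [sigmaMinusSq, e2]
  have hσp : sigmaPlusSq lam t = (u * u - 1) / (2 * lam) := by
    rw [sigmaPlusSq, e3]
  have hσm0 : 0 < sigmaMinusSq lam t := by
    rw [hσm]; exact div_pos (by linarith) (by positivity)
  have hrel : sigmaPlusSq lam t = u ^ 2 * sigmaMinusSq lam t := by
    rw [hσm, hσp]
    field_simp
  have hsq : Real.sqrt (2 * Real.pi * sigmaPlusSq lam t)
      = u * Real.sqrt (2 * Real.pi * sigmaMinusSq lam t) := by
    rw [hrel, show 2 * Real.pi * (u ^ 2 * sigmaMinusSq lam t)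
        = u ^ 2 * (2 * Real.pi * sigmaMinusSq lam t) by ring,
      Real.sqrt_mul (sq_nonneg u), Real.sqrt_sq hu0.le]
  have hexp : -lam * x₀ ^ 2 + lam * x ^ 2 +
      -(x - x₀ * u⁻¹) ^ 2 / (2 * sigmaMinusSq lam t)
      = -(x - x₀ * u) ^ 2 / (2 * sigmaPlusSq lam t) := by
    rw [hσm, hσp]
    have h1 : (1 : ℝ) - (u * u)⁻¹ ≠ 0 := by
      have : 0 < 1 - (u * u)⁻¹ := by linarith
      linarith
    have h2 : u * u - 1 ≠ 0 := huu1.ne'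
    have h3 : u ≠ 0 := hu0.ne'
    have hl : lam ≠ 0 := hlam.ne'
    field_simp
    have hw : (-1 + u ^ 2)⁻¹ * (-1 + u ^ 2) = 1 :=
      inv_mul_cancel₀ (by nlinarith)
    ring_nf
    linear_combination (x₀ ^ 2 - x ^ 2) * hw
  rw [e1, hsq, mul_inv, ← hexp, Real.exp_add, Real.exp_add]
  ring

/-- Corollary 4.2: `p₊ + p₋ = 1`, and the Gaussian transition density of the repulsive
Ornstein–Uhlenbeck process is the `p`-mixture of the two oppositely skewed h-transformed
densities. -/
theorem stmt_18 (lam t x x₀ : ℝ) (hlam : 0 < lam) (ht : 0 < t) :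
    pOU lam 1 x₀ + pOU lam (-1) x₀ = 1 ∧
    pOU lam (-1) x₀ * QOU lam (-1) x₀ t x + pOU lam 1 x₀ * QOU lam 1 x₀ t x
      = (Real.sqrt (2 * Real.pi * sigmaPlusSq lam t))⁻¹ *
          Real.exp (-(x - x₀ * Real.exp (lam * t)) ^ 2 / (2 * sigmaPlusSq lam t)) := by
  have hπ : (0:ℝ) < Real.pi := Real.pi_pos
  have hc1 : Real.sqrt lam / Real.sqrt Real.pi * Real.sqrt (Real.pi / lam) = 1 := by
    rw [Real.sqrt_div hπ.le]
    have h1 : Real.sqrt lam ≠ 0 := (Real.sqrt_pos.2 hlam).ne'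
    have h2 : Real.sqrt Real.pi ≠ 0 := (Real.sqrt_pos.2 hπ).ne'
    field_simp
  have psum : ∀ c : ℝ, pOU lam 1 c + pOU lam (-1) c = 1 := by
    intro c
    unfold pOU
    rw [one_mul, neg_one_mul, ← mul_add, intsumOU lam c hlam, hc1]
  refine ⟨psum x₀, ?_⟩
  -- each weighted `Q` equals `e^{-λx₀²} h_ε(x,t) ·` Gaussian kernel
  have key : ∀ ε : ℝ, pOU lam ε x₀ * QOU lam ε x₀ t x
      = Real.exp (-lam * x₀ ^ 2) * hOU lam ε x t *
        ((Real.sqrt (2 * Real.pi * sigmaMinusSq lam t))⁻¹ *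
          Real.exp (-(x - x₀ * Real.exp (-lam * t)) ^ 2 / (2 * sigmaMinusSq lam t))) := by
    intro ε
    have hp : pOU lam ε x₀ ≠ 0 := by
      have : 0 < pOU lam ε x₀ :=
        mul_pos (div_pos (Real.sqrt_pos.2 hlam) (Real.sqrt_pos.2 hπ)) (IposOU lam _ hlam)
      exact this.ne'
    have hh0 : hOU lam ε x₀ 0 = Real.exp (lam * x₀ ^ 2) * pOU lam ε x₀ := by
      unfold hOU pOU
      rw [mul_zero, Real.exp_zero, one_mul, mul_assoc]
    have hex : Real.exp (lam * x₀ ^ 2) ≠ 0 := (Real.exp_pos _).ne'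
    have hmain : pOU lam ε x₀ *
        (hOU lam ε x t / (Real.exp (lam * x₀ ^ 2) * pOU lam ε x₀))
        = Real.exp (-lam * x₀ ^ 2) * hOU lam ε x t := by
      rw [show -lam * x₀ ^ 2 = -(lam * x₀ ^ 2) by ring, Real.exp_neg]
      field_simp [hp]
    rw [QOU, hh0, ← mul_assoc, hmain]
  rw [key, key]
  -- sum of the two harmonic functions
  have hsum : hOU lam (-1) x t + hOU lam 1 x t
      = Real.exp (-lam * t) * Real.exp (lam * x ^ 2) := by
    unfold hOU
    rw [one_mul, neg_one_mul]
    set I1 := (∫ s in Set.Iic x, Real.exp (-lam * s ^ 2)) with hI1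
    set I2 := (∫ s in Set.Iic (-x), Real.exp (-lam * s ^ 2)) with hI2
    have hI : I1 + I2 = Real.sqrt (Real.pi / lam) := intsumOU lam x hlam
    set e := Real.exp (-lam * t)
    set ex := Real.exp (lam * x ^ 2)
    set c := Real.sqrt lam / Real.sqrt Real.pi with hc
    calc e * ex * c * I2 + e * ex * c * I1 = e * ex * (c * (I1 + I2)) := by ring
      _ = e * ex := by rw [hI, hc1, mul_one]
  calc Real.exp (-lam * x₀ ^ 2) * hOU lam (-1) x t *
        ((Real.sqrt (2 * Real.pi * sigmaMinusSq lam t))⁻¹ *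
          Real.exp (-(x - x₀ * Real.exp (-lam * t)) ^ 2 / (2 * sigmaMinusSq lam t))) +
      Real.exp (-lam * x₀ ^ 2) * hOU lam 1 x t *
        ((Real.sqrt (2 * Real.pi * sigmaMinusSq lam t))⁻¹ *
          Real.exp (-(x - x₀ * Real.exp (-lam * t)) ^ 2 / (2 * sigmaMinusSq lam t)))
      = Real.exp (-lam * x₀ ^ 2) * (hOU lam (-1) x t + hOU lam 1 x t) *
        ((Real.sqrt (2 * Real.pi * sigmaMinusSq lam t))⁻¹ *
          Real.exp (-(x - x₀ * Real.exp (-lam * t)) ^ 2 / (2 * sigmaMinusSq lam t))) := by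
        ring
    _ = _ := by rw [hsum]; exact finalAlgOU lam t x x₀ hlam ht
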